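/- arXiv:1612.06023 — 11 statements merged into one kernel-verified Lean document; each statement's English description precedes it below -/
import Mathlib

section
/- Let x, y, a, b be real numbers with x·y ≤ 0, |2x + y| ≤ a and |x − y| ≤ b. If 2a < b, then 4xy + x² + y² ≥ (2a² − 2ab − b²)/3. -/
/-! In the coordinates `u = 2x + y`, `v = x - y` the form is `4xy + x² + y² = (2u² - 2uv - v²)/3`.
On the box `|u| ≤ a`, `|v| ≤ b` the form is concave in `v`, so its minimum over `v` is
`2|u|² - 2|u|b - b²`, attained at `v = ± b`; as a function of `|u|` this decreases on `[0, b/2] ⊇ [0, a]`,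
so the minimum over the box is the value at the corner `(a, b)`. -/

lemma four_mul_mul_add_sq_add_sq_eq (x y : ℝ) :
    4 * x * y + x ^ 2 + y ^ 2 =
      (2 * (2 * x + y) ^ 2 - 2 * (2 * x + y) * (x - y) - (x - y) ^ 2) / 3 := by
  ring

lemma neg_sq_sub_two_mul_abs_mul_le {u v b : ℝ} (hv : |v| ≤ b) :
    -b ^ 2 - 2 * |u| * b ≤ -v ^ 2 - 2 * u * v := by
  have huv : u * v ≤ |u| * b := calc
    u * v ≤ |u * v| := le_abs_self _
    _ = |u| * |v| := abs_mul u v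
    _ ≤ |u| * b := mul_le_mul_of_nonneg_left hv (abs_nonneg u)
  have hvb : v ^ 2 ≤ b ^ 2 := sq_le_sq' (abs_le.mp hv).1 (abs_le.mp hv).2
  linarith

lemma sq_sub_mul_le_sq_sub_mul {t a b : ℝ} (ht : t ≤ a) (hab : 2 * a ≤ b) :
    a ^ 2 - a * b ≤ t ^ 2 - t * b := by
  have hfactor : t ^ 2 - t * b - (a ^ 2 - a * b) = (a - t) * (b - a - t) := by ring
  have hnonneg : 0 ≤ (a - t) * (b - a - t) :=
    mul_nonneg (sub_nonneg.mpr ht) (by linarith)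
  linarith

lemma two_sq_sub_two_mul_sub_sq_le {u v a b : ℝ} (hu : |u| ≤ a) (hv : |v| ≤ b)
    (hab : 2 * a ≤ b) :
    2 * a ^ 2 - 2 * a * b - b ^ 2 ≤ 2 * u ^ 2 - 2 * u * v - v ^ 2 := by
  have hmin_v := neg_sq_sub_two_mul_abs_mul_le (u := u) hv
  have hmin_u := sq_sub_mul_le_sq_sub_mul hu hab
  rw [sq_abs] at hmin_u
  linarith

theorem stmt_0_general (x y a b : ℝ)
    (h1 : |2 * x + y| ≤ a) (h2 : |x - y| ≤ b) (h3 : 2 * a < b) :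
    4 * x * y + x ^ 2 + y ^ 2 ≥ (2 * a ^ 2 - 2 * a * b - b ^ 2) / 3 := by
  rw [four_mul_mul_add_sq_add_sq_eq, ge_iff_le]
  exact div_le_div_of_nonneg_right (two_sq_sub_two_mul_sub_sq_le h1 h2 h3.le) zero_le_three

theorem stmt_0 (x y a b : ℝ) (hxy : x * y ≤ 0)
    (h1 : |2 * x + y| ≤ a) (h2 : |x - y| ≤ b) (h3 : 2 * a < b) :
    4 * x * y + x ^ 2 + y ^ 2 ≥ (2 * a ^ 2 - 2 * a * b - b ^ 2) / 3 :=
  stmt_0_general x y a b h1 h2 h3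
end

section
/- Let x, y, a, b be real numbers with x·y ≤ 0, |2x + y| ≤ a and |x − y| ≤ b. If 2a ≥ b, then 4xy + x² + y² ≥ −b²/2. -/
theorem neg_sq_sub_div_two_le (x y : ℝ) : -(x - y) ^ 2 / 2 ≤ 4 * x * y + x ^ 2 + y ^ 2 := by
  have key : 4 * x * y + x ^ 2 + y ^ 2 = 3 / 2 * (x + y) ^ 2 - (x - y) ^ 2 / 2 := by ring
  rw [key]
  linarith [sq_nonneg (x + y)]

theorem stmt_1_general (x y b : ℝ) (h2 : |x - y| ≤ b) :
    4 * x * y + x ^ 2 + y ^ 2 ≥ -b ^ 2 / 2 := by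
  have hb : (x - y) ^ 2 ≤ b ^ 2 := sq_le_sq' (abs_le.mp h2).1 (abs_le.mp h2).2
  calc -b ^ 2 / 2 ≤ -(x - y) ^ 2 / 2 := by linarith
    _ ≤ 4 * x * y + x ^ 2 + y ^ 2 := neg_sq_sub_div_two_le x y

theorem stmt_1 (x y a b : ℝ) (hxy : x * y ≤ 0)
    (h1 : |2 * x + y| ≤ a) (h2 : |x - y| ≤ b) (h3 : 2 * a ≥ b) :
    4 * x * y + x ^ 2 + y ^ 2 ≥ -b ^ 2 / 2 :=
  stmt_1_general x y b h2
end

section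
/- Let λ₂, λ₃, μ₂, μ₃, α, δ be real numbers with −λ₃/2 ≤ λ₂ ≤ λ₃, −μ₃/2 ≤ μ₂ ≤ μ₃, λ₃ + λ₂ + μ₃ + μ₂ = 2(α − 2/3), λ₃ − λ₂ + μ₃ − μ₂ = δ, δ ≥ 0 and α > 0. Then √2·(√(λ₃² + λ₂² + λ₂λ₃) + √(μ₃² + μ₂² + μ₂μ₃)) ≤ (6α − 4 + δ)/√6. -/
/-! For a trace-free symmetric 3×3 matrix with top eigenvalues `a ≤ b`, the squared norm is
`2(b² + a² + ab)`, and `3(b² + a² + ab) ≤ (2b + a)²` because the difference is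
`(b - a)(b + 2a) ≥ 0`. Hence each of `|W⁺|`, `|W⁻|` is at most `(4b + 2a)/√6`, which is linear in the
eigenvalues; summing the two bounds, the numerators add up to `6α - 4 + δ` by the two linear
constraints. -/

lemma sq_add_sq_add_mul_le (a b : ℝ) (h1 : -b / 2 ≤ a) (h2 : a ≤ b) :
    3 * (b ^ 2 + a ^ 2 + a * b) ≤ (2 * b + a) ^ 2 := by
  nlinarith [mul_nonneg (sub_nonneg.mpr h2) (by linarith : (0 : ℝ) ≤ b + 2 * a)]

lemma sqrt_two_mul_sqrt_sq_add_sq_add_mul_le (a b : ℝ) (h1 : -b / 2 ≤ a) (h2 : a ≤ b) :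
    √2 * √(b ^ 2 + a ^ 2 + a * b) ≤ (4 * b + 2 * a) / √6 := by
  have hnum : 0 ≤ 4 * b + 2 * a := by linarith
  calc √2 * √(b ^ 2 + a ^ 2 + a * b) = √(2 * (b ^ 2 + a ^ 2 + a * b)) := by
        rw [Real.sqrt_mul zero_le_two]
    _ ≤ √((4 * b + 2 * a) ^ 2 / 6) := by
        gcongr
        linarith [sq_add_sq_add_mul_le a b h1 h2]
    _ = (4 * b + 2 * a) / √6 := by
        rw [Real.sqrt_div' _ (by norm_num), Real.sqrt_sq hnum]

theorem stmt_3_general (l2 l3 m2 m3 α δ : ℝ)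
    (hl1 : -l3 / 2 ≤ l2) (hl2 : l2 ≤ l3)
    (hm1 : -m3 / 2 ≤ m2) (hm2 : m2 ≤ m3)
    (hsum : l3 + l2 + m3 + m2 = 2 * (α - 2 / 3))
    (hdiff : l3 - l2 + m3 - m2 = δ) :
    Real.sqrt 2 * (Real.sqrt (l3 ^ 2 + l2 ^ 2 + l2 * l3) +
      Real.sqrt (m3 ^ 2 + m2 ^ 2 + m2 * m3)) ≤ (6 * α - 4 + δ) / Real.sqrt 6 := by
  have hnum : 6 * α - 4 + δ = (4 * l3 + 2 * l2) + (4 * m3 + 2 * m2) := by linarith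
  rw [mul_add, hnum, add_div]
  exact add_le_add (sqrt_two_mul_sqrt_sq_add_sq_add_mul_le l2 l3 hl1 hl2)
    (sqrt_two_mul_sqrt_sq_add_sq_add_mul_le m2 m3 hm1 hm2)

theorem stmt_3 (l2 l3 m2 m3 α δ : ℝ)
    (hl1 : -l3 / 2 ≤ l2) (hl2 : l2 ≤ l3)
    (hm1 : -m3 / 2 ≤ m2) (hm2 : m2 ≤ m3)
    (hsum : l3 + l2 + m3 + m2 = 2 * (α - 2 / 3))
    (hdiff : l3 - l2 + m3 - m2 = δ)
    (hδ : δ ≥ 0) (hα : α > 0) :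
    Real.sqrt 2 * (Real.sqrt (l3 ^ 2 + l2 ^ 2 + l2 * l3) +
      Real.sqrt (m3 ^ 2 + m2 ^ 2 + m2 * m3)) ≤ (6 * α - 4 + δ) / Real.sqrt 6 :=
  stmt_3_general l2 l3 m2 m3 α δ hl1 hl2 hm1 hm2 hsum hdiff
end

section
/- Let λ₂, λ₃, μ₂, μ₃, α, δ be real numbers with −λ₃/2 ≤ λ₂ ≤ λ₃, −μ₃/2 ≤ μ₂ ≤ μ₃, λ₃ + λ₂ + μ₃ + μ₂ = 2(α − 2/3), λ₃ − λ₂ + μ₃ − μ₂ = δ, δ ≥ 0 and α > 0. Then 2(λ₃² + λ₂² + λ₂λ₃) + 2(μ₃² + μ₂² + μ₂μ₃) ≤ (1/2)·(12α² − 16α + 16/3 + δ²). -/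
/-! In the coordinates `s = λ₂ + λ₃`, `p = λ₃ - λ₂` (and `t`, `q` for the `μ`'s) one has
`4 (λ₃² + λ₂² + λ₂λ₃) = 3 s² + p²`, while the constraints make the right-hand side
`2 (3 (s + t)² + (p + q)²)`. The difference of the two sides is therefore `2 (3 s t + p q)`,
which is nonnegative because the eigenvalue ordering makes `s, t, p, q ≥ 0`. -/

lemma four_mul_sq_add_sq_add_mul {R : Type*} [CommRing R] (a b : R) :
    4 * (b ^ 2 + a ^ 2 + a * b) = 3 * (a + b) ^ 2 + (b - a) ^ 2 := by
  ring

lemma four_mul_sq_add_sq_add_mul_add_le {R : Type*} [CommRing R] [LinearOrder R]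
    [IsStrictOrderedRing R] {l2 l3 m2 m3 : R}
    (hl : 0 ≤ l2 + l3) (hl' : l2 ≤ l3) (hm : 0 ≤ m2 + m3) (hm' : m2 ≤ m3) :
    4 * (l3 ^ 2 + l2 ^ 2 + l2 * l3) + 4 * (m3 ^ 2 + m2 ^ 2 + m2 * m3) ≤
      3 * (l3 + l2 + m3 + m2) ^ 2 + (l3 - l2 + m3 - m2) ^ 2 := by
  have hcross : 0 ≤ 3 * ((l2 + l3) * (m2 + m3)) + (l3 - l2) * (m3 - m2) :=
    add_nonneg (mul_nonneg zero_le_three (mul_nonneg hl hm))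
      (mul_nonneg (sub_nonneg.2 hl') (sub_nonneg.2 hm'))
  calc 4 * (l3 ^ 2 + l2 ^ 2 + l2 * l3) + 4 * (m3 ^ 2 + m2 ^ 2 + m2 * m3)
      = 3 * (l2 + l3) ^ 2 + (l3 - l2) ^ 2 + (3 * (m2 + m3) ^ 2 + (m3 - m2) ^ 2) := by
        rw [four_mul_sq_add_sq_add_mul, four_mul_sq_add_sq_add_mul]
    _ ≤ 3 * (l2 + l3) ^ 2 + (l3 - l2) ^ 2 + (3 * (m2 + m3) ^ 2 + (m3 - m2) ^ 2) +
          2 * (3 * ((l2 + l3) * (m2 + m3)) + (l3 - l2) * (m3 - m2)) :=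
        le_add_of_nonneg_right (mul_nonneg zero_le_two hcross)
    _ = 3 * (l3 + l2 + m3 + m2) ^ 2 + (l3 - l2 + m3 - m2) ^ 2 := by ring

theorem stmt_4_general (l2 l3 m2 m3 α δ : ℝ)
    (hl1 : -l3 / 2 ≤ l2) (hl2 : l2 ≤ l3)
    (hm1 : -m3 / 2 ≤ m2) (hm2 : m2 ≤ m3)
    (hsum : l3 + l2 + m3 + m2 = 2 * (α - 2 / 3))
    (hdiff : l3 - l2 + m3 - m2 = δ) :
    2 * (l3 ^ 2 + l2 ^ 2 + l2 * l3) + 2 * (m3 ^ 2 + m2 ^ 2 + m2 * m3) ≤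
      (1 / 2) * (12 * α ^ 2 - 16 * α + 16 / 3 + δ ^ 2) := by
  have hquad : 12 * α ^ 2 - 16 * α + 16 / 3 = 3 * (l3 + l2 + m3 + m2) ^ 2 := by
    rw [hsum]; ring
  have key := four_mul_sq_add_sq_add_mul_add_le (by linarith) hl2 (by linarith) hm2
  rw [hquad, ← hdiff]
  linarith

theorem stmt_4 (l2 l3 m2 m3 α δ : ℝ)
    (hl1 : -l3 / 2 ≤ l2) (hl2 : l2 ≤ l3)
    (hm1 : -m3 / 2 ≤ m2) (hm2 : m2 ≤ m3)
    (hsum : l3 + l2 + m3 + m2 = 2 * (α - 2 / 3))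
    (hdiff : l3 - l2 + m3 - m2 = δ)
    (hδ : δ ≥ 0) (hα : α > 0) :
    2 * (l3 ^ 2 + l2 ^ 2 + l2 * l3) + 2 * (m3 ^ 2 + m2 ^ 2 + m2 * m3) ≤
      (1 / 2) * (12 * α ^ 2 - 16 * α + 16 / 3 + δ ^ 2) :=
  stmt_4_general l2 l3 m2 m3 α δ hl1 hl2 hm1 hm2 hsum hdiff
end

section
/- Let p, q, m, n, A, D be real numbers satisfying p + m = A, q + n = D, 0 ≤ q ≤ 3p and 0 ≤ n ≤ 3m. Then √(3p² + q²) + √(3m² + n²) ≤ (3A + D)/√3. -/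
/- On the wedge `0 ≤ q ≤ 3p` the quantity `√(3p² + q²)` is dominated by the linear form
`(3p + q)/√3`, because `(3p + q)² - 3(3p² + q²) = 2q(3p - q) ≥ 0`. The theorem is the sum of this
bound for `(p, q)` and for `(m, n)`. -/

lemma sqrt_three_mul_sq_add_sq_le {p q : ℝ} (hq0 : 0 ≤ q) (hq3 : q ≤ 3 * p) :
    √(3 * p ^ 2 + q ^ 2) ≤ (3 * p + q) / √3 := by
  rw [le_div_iff₀ (by positivity), ← Real.sqrt_mul (by positivity)]
  exact Real.sqrt_le_iff.mpr ⟨by linarith, by nlinarith [mul_nonneg hq0 (sub_nonneg.2 hq3)]⟩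

theorem stmt_5 (p q m n A D : ℝ)
    (h1 : p + m = A) (h2 : q + n = D)
    (hq0 : 0 ≤ q) (hq3 : q ≤ 3 * p)
    (hn0 : 0 ≤ n) (hn3 : n ≤ 3 * m) :
    Real.sqrt (3 * p ^ 2 + q ^ 2) + Real.sqrt (3 * m ^ 2 + n ^ 2) ≤
      (3 * A + D) / Real.sqrt 3 := by
  subst h1 h2
  calc √(3 * p ^ 2 + q ^ 2) + √(3 * m ^ 2 + n ^ 2)
      ≤ (3 * p + q) / √3 + (3 * m + n) / √3 :=
        add_le_add (sqrt_three_mul_sq_add_sq_le hq0 hq3) (sqrt_three_mul_sq_add_sq_le hn0 hn3)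
    _ = (3 * (p + m) + (q + n)) / √3 := by ring
end

section
/- Let a₁, a₂, a₃, b₁, b₂, b₃ be real numbers satisfying: a₁ ≤ a₂ ≤ a₃, a₁ + a₂ + a₃ = 1, b₁ + b₂ + b₃ = 0, |b₂ − b₁| ≤ a₂ − a₁, |b₃ − b₁| ≤ a₃ − a₁, |b₃ − b₂| ≤ a₃ − a₂, and a₁² + b₁² + 2(a₂a₃ + b₂b₃) ≤ a₁. If a₃ = α ≤ 1, then 4a₂ ≤ a₁ + 1 and a₁ ≥ (15 − 8α − √3·√(96α² − 80α + 19))/28. -/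
/-!
Write `d = a₂ - a₁`, `e = a₃ - a₂`. Under `b₁ + b₂ + b₃ = 0` the `b`-part of the
minimum-point inequality is `6 (b₁² + 2 b₂ b₃) = (3 b₁)² - 3 (b₂ - b₃)²`, where
`|b₂ - b₃| ≤ e` and `|3 b₁ - (b₂ - b₃)| = 2 |b₂ - b₁| ≤ 2 d`. The crude bound `-3 e²` already
forces `2 d ≤ e`, which is the first claim. Knowing this, `(3 b₁)²` is at least
`(|b₂ - b₃| - 2 d)²`, and the sharper bound `(e - 2 d)² - 3 e²` turns the inequality into the
quadratic `14 a₁² + (8 α - 15) a₁ + 3 - 4 α² ≤ 0`, whose discriminant is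
`3 (96 α² - 80 α + 19)`; `a₁` lies above its smaller root.
-/

theorem neg_sub_sqrt_discrim_div_le {a b c x : ℝ} (ha : 0 < a)
    (h : a * (x * x) + b * x + c ≤ 0) : (-b - √(discrim a b c)) / (2 * a) ≤ x := by
  have hsq : (2 * a * x + b) ^ 2 ≤ discrim a b c := by
    rw [discrim]; nlinarith
  have := neg_abs_le (2 * a * x + b) |>.trans' (neg_le_neg (Real.abs_le_sqrt hsq))
  rw [div_le_iff₀ (by positivity)]
  linarith

theorem le_sq_sub_three_mul_sq {u x d e : ℝ} (hd : 0 ≤ d) (hde : 2 * d ≤ e)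
    (hx : |x| ≤ e) (hux : |u - x| ≤ 2 * d) :
    (e - 2 * d) ^ 2 - 3 * e ^ 2 ≤ u ^ 2 - 3 * x ^ 2 := by
  have hu : |x| - 2 * d ≤ |u| := by
    have := abs_sub_abs_le_abs_sub x u
    rw [abs_sub_comm] at this
    linarith
  have hx2 : x ^ 2 = |x| ^ 2 := (sq_abs x).symm
  have hu2 : u ^ 2 = |u| ^ 2 := (sq_abs u).symm
  rcases le_total (2 * d) |x| with hbig | hsmall
  · nlinarith [abs_nonneg u, abs_nonneg x]
  · nlinarith [abs_nonneg x, sq_nonneg u]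

theorem two_mul_sub_le_sub {a1 a2 a3 : ℝ} (h12 : a1 ≤ a2) (h23 : a2 ≤ a3)
    (hsum : a1 + a2 + a3 = 1) (ha3 : a3 ≤ 1)
    (h : a1 ^ 2 + 2 * (a2 * a3) - (a3 - a2) ^ 2 / 2 ≤ a1) :
    2 * (a2 - a1) ≤ a3 - a2 := by
  have key : a2 * (a2 - a1 + 3 * (a3 - a2) / 2) ≤ a3 * ((a3 - a2) / 2 - (a2 - a1)) := by
    linear_combination h - a1 * hsum
  have hlhs : 0 ≤ a2 * (a2 - a1 + 3 * (a3 - a2) / 2) :=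
    mul_nonneg (by linarith) (by linarith)
  have := nonneg_of_mul_nonneg_right (hlhs.trans key) (by linarith)
  linarith

theorem stmt_7_general (a1 a2 a3 b1 b2 b3 α : ℝ)
    (h12 : a1 ≤ a2) (h23 : a2 ≤ a3) (hasum : a1 + a2 + a3 = 1)
    (hbsum : b1 + b2 + b3 = 0)
    (hb21 : |b2 - b1| ≤ a2 - a1)
    (hb32 : |b3 - b2| ≤ a3 - a2)
    (hmin : a1 ^ 2 + b1 ^ 2 + 2 * (a2 * a3 + b2 * b3) ≤ a1)
    (ha3 : a3 = α) (hα : α ≤ 1) :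
    4 * a2 ≤ a1 + 1 ∧
      a1 ≥ (15 - 8 * α - Real.sqrt 3 * Real.sqrt (96 * α ^ 2 - 80 * α + 19)) / 28 := by
  subst ha3
  have hbpart : 6 * (b1 ^ 2 + 2 * (b2 * b3)) = (3 * b1) ^ 2 - 3 * (b2 - b3) ^ 2 := by
    linear_combination (-3 * b1 + 3 * b2 + 3 * b3) * hbsum
  have hx : |b2 - b3| ≤ a3 - a2 := by rwa [abs_sub_comm]
  have hux : |3 * b1 - (b2 - b3)| ≤ 2 * (a2 - a1) := by
    rw [show 3 * b1 - (b2 - b3) = -2 * (b2 - b1) by linear_combination hbsum,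
      abs_mul, abs_neg, abs_two]
    linarith
  have hgap : 2 * (a2 - a1) ≤ a3 - a2 := by
    have hx2 : (b2 - b3) ^ 2 ≤ (a3 - a2) ^ 2 := sq_le_sq' (abs_le.mp hx).1 (abs_le.mp hx).2
    refine two_mul_sub_le_sub h12 h23 hasum hα ?_
    linear_combination hmin + hx2 / 2 + (sq_nonneg (3 * b1) - hbpart) / 6
  refine ⟨by linarith, ?_⟩
  have hsharp := le_sq_sub_three_mul_sq (by linarith) hgap hx hux
  have hquad : 14 * (a1 * a1) + (8 * a3 - 15) * a1 + (3 - 4 * a3 ^ 2) ≤ 0 := by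
    have ha2 : a2 = 1 - a1 - a3 := by linarith
    subst ha2
    linear_combination 3 * (hmin + (hsharp - hbpart) / 6)
  have hroot := neg_sub_sqrt_discrim_div_le (by norm_num) hquad
  rw [← Real.sqrt_mul (by norm_num)]
  have hdisc : discrim 14 (8 * a3 - 15) (3 - 4 * a3 ^ 2) = 3 * (96 * a3 ^ 2 - 80 * a3 + 19) := by
    rw [discrim]; ring
  rw [hdisc] at hroot
  linarith

theorem stmt_7 (a1 a2 a3 b1 b2 b3 α : ℝ)
    (h12 : a1 ≤ a2) (h23 : a2 ≤ a3) (hasum : a1 + a2 + a3 = 1)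
    (hbsum : b1 + b2 + b3 = 0)
    (hb21 : |b2 - b1| ≤ a2 - a1) (hb31 : |b3 - b1| ≤ a3 - a1)
    (hb32 : |b3 - b2| ≤ a3 - a2)
    (hmin : a1 ^ 2 + b1 ^ 2 + 2 * (a2 * a3 + b2 * b3) ≤ a1)
    (ha3 : a3 = α) (hα : α ≤ 1) :
    4 * a2 ≤ a1 + 1 ∧
      a1 ≥ (15 - 8 * α - Real.sqrt 3 * Real.sqrt (96 * α ^ 2 - 80 * α + 19)) / 28 :=
  stmt_7_general a1 a2 a3 b1 b2 b3 α h12 h23 hasum hbsum hb21 hb32 hmin ha3 hα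
end

section
/- Let a₁, a₂, a₃, b₁, b₂, b₃ be real numbers satisfying: a₁ ≤ a₂ ≤ a₃, a₁ + a₂ + a₃ = 1, b₁ + b₂ + b₃ = 0, |b₂ − b₁| ≤ a₂ − a₁, |b₃ − b₁| ≤ a₃ − a₁, |b₃ − b₂| ≤ a₃ − a₂, and a₁² + b₁² + 2(a₂a₃ + b₂b₃) ≤ a₁. If a₃ ≤ √3/2, then a₁ ≥ 0. -/
/-!
Write `q = a₂ - a₁` and `d = a₃ - a₂`. Since `b₂ + b₃ = -b₁`, the `b`-terms of the minimality
inequality combine to `b₁² + 2 b₂ b₃ = (3 b₁² - (b₃ - b₂)²) / 2`, and Berger's inequalities bound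
`|b₃ - b₂| ≤ d` and `|3 b₁ + (b₃ - b₂)| ≤ 2q`. This gives the lower bound `-d²/2`, and the sharper
`(2q² - 2qd - d²)/3` when `d ≥ 2q`. Inserting the appropriate bound into the minimality inequality
leaves a quadratic inequality in `a₁, a₃` that has no solution with `a₁ < 0` once `a₃² ≤ 3/4`.
-/

lemma sq_add_two_mul_mul_eq {b1 b2 b3 : ℝ} (hb : b1 + b2 + b3 = 0) :
    b1 ^ 2 + 2 * (b2 * b3) = (3 * b1 ^ 2 - (b3 - b2) ^ 2) / 2 := by
  have : b1 = -(b2 + b3) := by linarith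
  subst this
  ring

lemma neg_sq_div_two_le_sq_add_two_mul_mul {b1 b2 b3 d : ℝ} (hb : b1 + b2 + b3 = 0)
    (h32 : |b3 - b2| ≤ d) : -(d ^ 2 / 2) ≤ b1 ^ 2 + 2 * (b2 * b3) := by
  have : (b3 - b2) ^ 2 ≤ d ^ 2 := sq_le_sq' (abs_le.mp h32).1 (abs_le.mp h32).2
  rw [sq_add_two_mul_mul_eq hb]
  nlinarith [sq_nonneg b1]

lemma le_sq_sub_three_mul_sq_s8 {u v q d : ℝ} (hv : |v| ≤ d) (huv : |u + v| ≤ 2 * q)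
    (hqd : 2 * q ≤ d) : 4 * q ^ 2 - 4 * q * d - 2 * d ^ 2 ≤ u ^ 2 - 3 * v ^ 2 := by
  wlog hv0 : 0 ≤ v generalizing u v
  · simpa using this (u := -u) (v := -v) (by rwa [abs_neg]) (by rwa [← neg_add, abs_neg])
      (by linarith)
  have hq : 0 ≤ q := by linarith [abs_nonneg (u + v)]
  obtain ⟨-, hvd⟩ := abs_le.mp hv
  obtain ⟨-, huv⟩ := abs_le.mp huv
  rcases le_total v (2 * q) with hvq | hqv
  · nlinarith [sq_nonneg u, mul_nonneg (sub_nonneg.2 hqd) (by linarith : 0 ≤ d + 4 * q)]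
  · -- here `u ≤ 2q - v ≤ 0`, so `u² ≥ (v - 2q)²`
    nlinarith [mul_nonneg (sub_nonneg.2 hvd) (by linarith : 0 ≤ d + v),
      mul_nonneg (sub_nonneg.2 hvd) hq]

lemma two_mul_sq_sub_le_three_mul_sq_add_two_mul_mul {b1 b2 b3 q d : ℝ}
    (hb : b1 + b2 + b3 = 0) (h21 : |b2 - b1| ≤ q) (h32 : |b3 - b2| ≤ d) (hqd : 2 * q ≤ d) :
    2 * q ^ 2 - 2 * q * d - d ^ 2 ≤ 3 * (b1 ^ 2 + 2 * (b2 * b3)) := by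
  have h21' : |3 * b1 + (b3 - b2)| ≤ 2 * q := by
    rw [abs_le] at h21 ⊢
    constructor <;> linarith [h21.1, h21.2]
  have := le_sq_sub_three_mul_sq_s8 h32 h21' hqd
  rw [sq_add_two_mul_mul_eq hb]
  nlinarith

lemma nonneg_of_sq_add_two_mul_mul_sub_sq_le {a1 a2 a3 : ℝ} (h23 : a2 ≤ a3)
    (hsum : a1 + a2 + a3 = 1) (hd : a3 - a2 ≤ 2 * (a2 - a1)) (ha3 : a3 < 1)
    (h : a1 ^ 2 + 2 * (a2 * a3) - (a3 - a2) ^ 2 / 2 ≤ a1) : 0 ≤ a1 := by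
  have ha2 : a2 = 1 - a1 - a3 := by linarith
  subst ha2
  -- the left side minus `a₁` is at least `(1 + a₁)(1 - 3a₁)/4`, using `2(a₃ - a₂) ≤ 1 - 3a₁`
  nlinarith [mul_nonneg (by linarith : 0 ≤ 1 - 3 * a1 - 2 * (2 * a3 - 1 + a1))
    (by linarith : 0 ≤ 1 - 3 * a1 + 2 * (2 * a3 - 1 + a1))]

lemma nonneg_of_three_mul_sq_add_two_mul_mul_le {a1 a2 a3 : ℝ} (hsum : a1 + a2 + a3 = 1)
    (ha3 : a3 ^ 2 ≤ 3 / 4)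
    (h : 3 * (a1 ^ 2 + 2 * (a2 * a3)) + 2 * (a2 - a1) ^ 2 - 2 * (a2 - a1) * (a3 - a2)
      - (a3 - a2) ^ 2 ≤ 3 * a1) : 0 ≤ a1 := by
  have ha2 : a2 = 1 - a1 - a3 := by linarith
  subst ha2
  have key : 3 * (a1 ^ 2 + 2 * ((1 - a1 - a3) * a3)) + 2 * (1 - a1 - a3 - a1) ^ 2
      - 2 * (1 - a1 - a3 - a1) * (a3 - (1 - a1 - a3)) - (a3 - (1 - a1 - a3)) ^ 2 - 3 * a1
      = (3 - 4 * a3 ^ 2) + (-a1) * (15 - 8 * a3) + 14 * a1 ^ 2 := by ring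
  nlinarith

theorem stmt_8_general (a1 a2 a3 b1 b2 b3 : ℝ)
    (h12 : a1 ≤ a2) (h23 : a2 ≤ a3) (hasum : a1 + a2 + a3 = 1)
    (hbsum : b1 + b2 + b3 = 0)
    (hb21 : |b2 - b1| ≤ a2 - a1)
    (hb32 : |b3 - b2| ≤ a3 - a2)
    (hmin : a1 ^ 2 + b1 ^ 2 + 2 * (a2 * a3 + b2 * b3) ≤ a1)
    (ha3 : a3 ≤ Real.sqrt 3 / 2) :
    a1 ≥ 0 := by
  have ha3_nonneg : 0 ≤ a3 := by linarith
  have ha3_sq : a3 ^ 2 ≤ 3 / 4 := by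
    calc a3 ^ 2 ≤ (Real.sqrt 3 / 2) ^ 2 := pow_le_pow_left₀ ha3_nonneg ha3 2
      _ = 3 / 4 := by rw [div_pow, Real.sq_sqrt (by norm_num)]; norm_num
  rcases le_total (a3 - a2) (2 * (a2 - a1)) with hd | hd
  · have hb := neg_sq_div_two_le_sq_add_two_mul_mul hbsum hb32
    exact nonneg_of_sq_add_two_mul_mul_sub_sq_le h23 hasum hd (by nlinarith) (by linarith)
  · have hb := two_mul_sq_sub_le_three_mul_sq_add_two_mul_mul hbsum hb21 hb32 hd
    exact nonneg_of_three_mul_sq_add_two_mul_mul_le hasum ha3_sq (by linarith)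

theorem stmt_8 (a1 a2 a3 b1 b2 b3 : ℝ)
    (h12 : a1 ≤ a2) (h23 : a2 ≤ a3) (hasum : a1 + a2 + a3 = 1)
    (hbsum : b1 + b2 + b3 = 0)
    (hb21 : |b2 - b1| ≤ a2 - a1) (hb31 : |b3 - b1| ≤ a3 - a1)
    (hb32 : |b3 - b2| ≤ a3 - a2)
    (hmin : a1 ^ 2 + b1 ^ 2 + 2 * (a2 * a3 + b2 * b3) ≤ a1)
    (ha3 : a3 ≤ Real.sqrt 3 / 2) :
    a1 ≥ 0 :=
  stmt_8_general a1 a2 a3 b1 b2 b3 h12 h23 hasum hbsum hb21 hb32 hmin ha3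
end

section
/- Let a₁, a₂, a₃, b₁, b₂, b₃ be real numbers satisfying: a₁ ≤ a₂ ≤ a₃, a₁ + a₂ + a₃ = 1, b₁ + b₂ + b₃ = 0, |b₂ − b₁| ≤ a₂ − a₁, |b₃ − b₁| ≤ a₃ − a₁, |b₃ − b₂| ≤ a₃ − a₂, and a₁² + b₁² + 2(a₂a₃ + b₂b₃) ≤ a₁. If a₃ − a₂ = α < 2, then 4a₂ ≤ a₁ + 1 and a₁ ≥ (3 − 2α − √(1 + 8α² − 4α))/6. -/
theorem sq_sub_three_mul_sq_le {u d A C : ℝ} (hud : |u - d| ≤ A) (hd : |d| ≤ C) (hAC : A ≤ C) :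
    (C - A) ^ 2 - 3 * C ^ 2 ≤ u ^ 2 - 3 * d ^ 2 := by
  have hA : 0 ≤ A := (abs_nonneg _).trans hud
  rcases le_or_gt A |d| with hAd | hdA
  · have hu : |d| - A ≤ |u| := by
      linarith [abs_sub_abs_le_abs_sub d u, abs_sub_comm u d]
    have hu2 : (|d| - A) ^ 2 ≤ u ^ 2 := by
      rw [← sq_abs u]; exact pow_le_pow_left₀ (by linarith) hu 2
    nlinarith [mul_le_mul hd hd (abs_nonneg d) (hA.trans hAC), sq_abs d]
  · have : d ^ 2 ≤ A ^ 2 := by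
      rw [← sq_abs d]; exact pow_le_pow_left₀ (abs_nonneg d) hdA.le 2
    nlinarith [sq_nonneg u]

theorem stmt_9_general (a1 a2 a3 b1 b2 b3 α : ℝ)
    (hasum : a1 + a2 + a3 = 1)
    (hbsum : b1 + b2 + b3 = 0)
    (hb21 : |b2 - b1| ≤ a2 - a1)
    (hb32 : |b3 - b2| ≤ a3 - a2)
    (hmin : a1 ^ 2 + b1 ^ 2 + 2 * (a2 * a3 + b2 * b3) ≤ a1)
    (hα : a3 - a2 = α) (hα2 : α < 2) :
    4 * a2 ≤ a1 + 1 ∧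
      a1 ≥ (3 - 2 * α - Real.sqrt (1 + 8 * α ^ 2 - 4 * α)) / 6 := by
  have hd : |b3 - b2| ≤ α := hα ▸ hb32
  have hα0 : 0 ≤ α := (abs_nonneg _).trans hd
  have hd2 : (b3 - b2) ^ 2 ≤ α ^ 2 := sq_le_sq' (abs_le.mp hd).1 (abs_le.mp hd).2
  have hcurv : 6 * a1 ^ 2 + 12 * a2 * a3 + 9 * (b2 + b3) ^ 2 - 3 * (b3 - b2) ^ 2 ≤ 6 * a1 := by
    linear_combination 6 * hmin - 6 * (b1 - b2 - b3) * hbsum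
  have hupper : 4 * a2 ≤ a1 + 1 := by
    have ha1 : a1 = 1 - 2 * a2 - α := by linarith
    subst ha1
    nlinarith [sq_nonneg (b2 + b3), mul_nonneg hα0 (by linarith : (0:ℝ) ≤ 2 - α)]
  refine ⟨hupper, ?_⟩
  have hBerger : |3 * (b2 + b3) - (b3 - b2)| ≤ 2 * (a2 - a1) := by
    rw [show 3 * (b2 + b3) - (b3 - b2) = 2 * (b2 - b1) by linarith, abs_mul, abs_two]
    linarith
  -- `4a₂ ≤ a₁ + 1` is exactly `2(a₂ - a₁) ≤ α`
  have hkey := sq_sub_three_mul_sq_le hBerger hd (by linarith)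
  have hquad : 9 * (a1 * a1) + (6 * α - 9) * a1 + (2 - 2 * α - α ^ 2) ≤ 0 := by
    subst hα
    obtain rfl : a1 = 1 - a2 - a3 := by linarith
    linear_combination (hcurv + hkey) / 2
  have hdisc : discrim 9 (6 * α - 9) (2 - 2 * α - α ^ 2) = 3 ^ 2 * (1 + 8 * α ^ 2 - 4 * α) := by
    rw [discrim]; ring
  have hroot := neg_sub_sqrt_discrim_div_le (by norm_num) hquad
  rw [hdisc, Real.sqrt_mul (by norm_num), Real.sqrt_sq (by norm_num)] at hroot
  linarith

theorem stmt_9 (a1 a2 a3 b1 b2 b3 α : ℝ)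
    (h12 : a1 ≤ a2) (h23 : a2 ≤ a3) (hasum : a1 + a2 + a3 = 1)
    (hbsum : b1 + b2 + b3 = 0)
    (hb21 : |b2 - b1| ≤ a2 - a1) (hb31 : |b3 - b1| ≤ a3 - a1)
    (hb32 : |b3 - b2| ≤ a3 - a2)
    (hmin : a1 ^ 2 + b1 ^ 2 + 2 * (a2 * a3 + b2 * b3) ≤ a1)
    (hα : a3 - a2 = α) (hα2 : α < 2) :
    4 * a2 ≤ a1 + 1 ∧
      a1 ≥ (3 - 2 * α - Real.sqrt (1 + 8 * α ^ 2 - 4 * α)) / 6 :=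
  stmt_9_general a1 a2 a3 b1 b2 b3 α hasum hbsum hb21 hb32 hmin hα hα2
end

section
/- Let a₁, a₂, a₃, b₁, b₂, b₃ be real numbers satisfying: a₁ ≤ a₂ ≤ a₃, a₁ + a₂ + a₃ = 1, b₁ + b₂ + b₃ = 0, |b₂ − b₁| ≤ a₂ − a₁, |b₃ − b₁| ≤ a₃ − a₁, |b₃ − b₂| ≤ a₃ − a₂, and a₁² + b₁² + 2(a₂a₃ + b₂b₃) ≤ a₁. If a₃ − a₂ ≤ √3 − 1, then a₁ ≥ 0. -/
/-!
Put `d = a₃ - a₂`, `p = a₂ - a₁`, `x = b₃ - b₂`, `y = b₂ - b₁`. The trace conditions give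
`3 a₁ = 1 - (d + 2p)`, and the inequality at the minimum becomes
`(d + 2p)(d + 2p + 2) + (x + 2y)² ≤ 3d² + 3x²`, with `|x| ≤ d` and `|y| ≤ p` by Berger's
inequalities. Minimising the left side over this box: if `d ≤ 2p` it forces `d + 2p ≥ 4`, impossible
for `d < 1`; if `2p ≤ d` the worst corner `x = d`, `y = -p` gives `8p² + 4p + 2d ≤ 4d²`, which
together with `d + 2p > 1` would force `d² + 2d > 2`, i.e. `d > √3 - 1`.
-/

lemma sub_sq_sub_three_mul_sq_le_of_abs_le {d p x y : ℝ} (hx : |x| ≤ d) (hy : |y| ≤ p)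
    (hpd : 2 * p ≤ d) : (d - 2 * p) ^ 2 - 3 * d ^ 2 ≤ (x + 2 * y) ^ 2 - 3 * x ^ 2 := by
  obtain ⟨hx₁, hx₂⟩ := abs_le.mp hx
  obtain ⟨hy₁, hy₂⟩ := abs_le.mp hy
  -- The difference is `2 (AB + AC + BD - 2CD)` with `A = d - x`, `B = d + x`, `C = p - y`,
  -- `D = p + y` all nonnegative and `2C + 2D ≤ A + B`.
  rcases le_total (d + x) (2 * (p - y)) with h | h
  · nlinarith [mul_nonneg (sub_nonneg.2 hx₂) (neg_le_iff_add_nonneg.1 hx₁),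
      mul_nonneg (neg_le_iff_add_nonneg.1 hx₁) (neg_le_iff_add_nonneg.1 hy₁),
      mul_nonneg (sub_nonneg.2 hy₂) (by linarith : 0 ≤ d - x - 2 * (p + y))]
  · nlinarith [mul_nonneg (sub_nonneg.2 hx₂) (neg_le_iff_add_nonneg.1 hx₁),
      mul_nonneg (sub_nonneg.2 hx₂) (sub_nonneg.2 hy₂),
      mul_nonneg (neg_le_iff_add_nonneg.1 hy₁) (by linarith : 0 ≤ d + x - 2 * (p - y))]

lemma add_two_mul_le_one_of_le_sqrt_three_sub_one {d p x y : ℝ} (hx : |x| ≤ d) (hy : |y| ≤ p)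
    (hd : d ≤ √3 - 1)
    (h : (d + 2 * p) * (d + 2 * p + 2) + (x + 2 * y) ^ 2 ≤ 3 * d ^ 2 + 3 * x ^ 2) :
    d + 2 * p ≤ 1 := by
  have hx₂ : x ^ 2 ≤ d ^ 2 := sq_le_sq' (abs_le.mp hx).1 (abs_le.mp hx).2
  have hp : 0 ≤ p := (abs_nonneg y).trans hy
  have hd₀ : 0 ≤ d := (abs_nonneg x).trans hx
  have hsqrt : (√3) ^ 2 = 3 := Real.sq_sqrt (by norm_num)
  have hd₁ : d < 1 := by nlinarith [Real.sqrt_nonneg 3]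
  by_contra! ht
  rcases le_total d (2 * p) with hdp | hpd
  · nlinarith [sq_nonneg (x + 2 * y)]
  · have := sub_sq_sub_three_mul_sq_le_of_abs_le hx hy hpd
    nlinarith [Real.sqrt_nonneg 3]

theorem stmt_10_general (a1 a2 a3 b1 b2 b3 : ℝ)
    (hasum : a1 + a2 + a3 = 1)
    (hbsum : b1 + b2 + b3 = 0)
    (hb21 : |b2 - b1| ≤ a2 - a1)
    (hb32 : |b3 - b2| ≤ a3 - a2)
    (hmin : a1 ^ 2 + b1 ^ 2 + 2 * (a2 * a3 + b2 * b3) ≤ a1)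
    (hdiff : a3 - a2 ≤ Real.sqrt 3 - 1) :
    a1 ≥ 0 := by
  obtain rfl : a3 = 1 - a1 - a2 := by linarith
  obtain rfl : b1 = -b2 - b3 := by linarith
  have key := add_two_mul_le_one_of_le_sqrt_three_sub_one hb32 hb21 hdiff
    (by linear_combination 6 * hmin)
  linarith

theorem stmt_10 (a1 a2 a3 b1 b2 b3 : ℝ)
    (h12 : a1 ≤ a2) (h23 : a2 ≤ a3) (hasum : a1 + a2 + a3 = 1)
    (hbsum : b1 + b2 + b3 = 0)
    (hb21 : |b2 - b1| ≤ a2 - a1) (hb31 : |b3 - b1| ≤ a3 - a1)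
    (hb32 : |b3 - b2| ≤ a3 - a2)
    (hmin : a1 ^ 2 + b1 ^ 2 + 2 * (a2 * a3 + b2 * b3) ≤ a1)
    (hdiff : a3 - a2 ≤ Real.sqrt 3 - 1) :
    a1 ≥ 0 :=
  stmt_10_general a1 a2 a3 b1 b2 b3 hasum hbsum hb21 hb32 hmin hdiff
end

section
/- Let a₁, a₂, a₃, b₁, b₂, b₃ be real numbers satisfying: a₁ ≤ a₂ ≤ a₃, a₁ + a₂ + a₃ = 1, b₁ + b₂ + b₃ = 0, |b₂ − b₁| ≤ a₂ − a₁, |b₃ − b₁| ≤ a₃ − a₁, |b₃ − b₂| ≤ a₃ − a₂, and a₁² + b₁² + 2(a₂a₃ + b₂b₃) ≤ a₁. Suppose a₁ = δ ≥ 0 and a₂ ≤ (1 + δ)/4. Then 0 ≤ a₂ − a₁ ≤ 1 − 3δ − (1/2)·√(3 + 18δ² − 15δ). -/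
/-!
Put `x = a₂ - a₁`, `y = a₃ - a₁`, `u = b₂ - b₁`, `v = b₃ - b₁`. Since `b₁ + b₂ + b₃ = 0`,
`3 (b₁² + 2 b₂ b₃) = 4uv - u² - v²`, and over the polytope cut out by Berger's inequalities this
quadratic form is at least `3x² - y²` as soon as `y ≥ 3x`, which is exactly `a₂ ≤ (1 + δ)/4`.
Substituting into the Bochner inequality and eliminating `x = 1 - 3δ - y` leaves
`3 + 18δ² - 15δ ≤ 4y²`, i.e. `√(3 + 18δ² - 15δ) ≤ 2y = 2(1 - 3δ - x)`.
-/

/-- In the coordinates `s = u + v`, `d = v - u` the form is `(s² - 3d²)/2`; for `|d| ≤ 2x` drop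
`s²`, otherwise `|s| ≥ |d| - 2x`. -/
lemma three_mul_sq_sub_sq_le {x y u v : ℝ} (hxy : 3 * x ≤ y) (hu : |u| ≤ x)
    (hvu : |v - u| ≤ y - x) :
    3 * x ^ 2 - y ^ 2 ≤ 4 * u * v - u ^ 2 - v ^ 2 := by
  obtain ⟨hu₁, hu₂⟩ := abs_le.mp hu
  obtain ⟨hvu₁, hvu₂⟩ := abs_le.mp hvu
  have hform : 4 * u * v - u ^ 2 - v ^ 2 = ((u + v) ^ 2 - 3 * (v - u) ^ 2) / 2 := by ring
  rw [hform]
  rcases le_or_gt (v - u) (2 * x) with hd₂ | hd₂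
  · rcases le_or_gt (-(2 * x)) (v - u) with hd₁ | hd₁
    · nlinarith [mul_nonneg (by linarith : 0 ≤ y - 3 * x) (by linarith : 0 ≤ y + 3 * x),
        mul_nonneg (by linarith : 0 ≤ 2 * x - (v - u)) (by linarith : 0 ≤ 2 * x + (v - u)),
        sq_nonneg (u + v)]
    · nlinarith [mul_nonneg (by linarith : 0 ≤ -(u + v) + (v - u) + 2 * x)
          (by linarith : 0 ≤ -(u + v) - (v - u) - 2 * x),
        mul_nonneg (by linarith : 0 ≤ y - x + (v - u)) (by linarith : 0 ≤ y + x - (v - u))]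
  · nlinarith [mul_nonneg (by linarith : 0 ≤ (u + v) - (v - u) + 2 * x)
        (by linarith : 0 ≤ (u + v) + (v - u) - 2 * x),
      mul_nonneg (by linarith : 0 ≤ y - x - (v - u)) (by linarith : 0 ≤ y + x + (v - u))]

theorem stmt_11_general (a1 a2 a3 b1 b2 b3 δ : ℝ)
    (h12 : a1 ≤ a2) (hasum : a1 + a2 + a3 = 1)
    (hbsum : b1 + b2 + b3 = 0)
    (hb21 : |b2 - b1| ≤ a2 - a1)
    (hb32 : |b3 - b2| ≤ a3 - a2)
    (hmin : a1 ^ 2 + b1 ^ 2 + 2 * (a2 * a3 + b2 * b3) ≤ a1)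
    (ha1 : a1 = δ) (ha2 : a2 ≤ (1 + δ) / 4) :
    0 ≤ a2 - a1 ∧
      a2 - a1 ≤ 1 - 3 * δ - (1 / 2) * Real.sqrt (3 + 18 * δ ^ 2 - 15 * δ) := by
  subst ha1
  refine ⟨sub_nonneg.mpr h12, ?_⟩
  have hform := three_mul_sq_sub_sq_le (x := a2 - a1) (y := a3 - a1) (u := b2 - b1)
    (v := b3 - b1) (by linarith) hb21
    (by rwa [sub_sub_sub_cancel_right, sub_sub_sub_cancel_right])
  have hdisc : 3 + 18 * a1 ^ 2 - 15 * a1 ≤ (2 * (a3 - a1)) ^ 2 := by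
    obtain rfl : b1 = -b2 - b3 := by linarith
    obtain rfl : a3 = 1 - a1 - a2 := by linarith
    linear_combination 3 * hmin + hform
  have hsqrt : Real.sqrt (3 + 18 * a1 ^ 2 - 15 * a1) ≤ 2 * (a3 - a1) :=
    Real.sqrt_le_iff.mpr ⟨by linarith, hdisc⟩
  linarith

theorem stmt_11 (a1 a2 a3 b1 b2 b3 δ : ℝ)
    (h12 : a1 ≤ a2) (h23 : a2 ≤ a3) (hasum : a1 + a2 + a3 = 1)
    (hbsum : b1 + b2 + b3 = 0)
    (hb21 : |b2 - b1| ≤ a2 - a1) (hb31 : |b3 - b1| ≤ a3 - a1)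
    (hb32 : |b3 - b2| ≤ a3 - a2)
    (hmin : a1 ^ 2 + b1 ^ 2 + 2 * (a2 * a3 + b2 * b3) ≤ a1)
    (ha1 : a1 = δ) (hδ : δ ≥ 0) (ha2 : a2 ≤ (1 + δ) / 4) :
    0 ≤ a2 - a1 ∧
      a2 - a1 ≤ 1 - 3 * δ - (1 / 2) * Real.sqrt (3 + 18 * δ ^ 2 - 15 * δ) :=
  stmt_11_general a1 a2 a3 b1 b2 b3 δ h12 hasum hbsum hb21 hb32 hmin ha1 ha2
end

section
/- Let a, b, c be real numbers with a + b + c = 0. Then 36·abc ≤ 2√6·(a² + b² + c²)^{3/2}. -/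
/-!
Since `a + b + c = 0`, the numbers `a, b, c` are the roots of `X³ + pX + q` with
`p = -(a² + b² + c²)/2` and `q = -abc`, and the discriminant `-4p³ - 27q²` is
`((a - b)(b - c)(c - a))² ≥ 0`. This is the inequality `54 (abc)² ≤ (a² + b² + c²)³`,
whose square root is the claim.
-/

section

variable {R : Type*} [CommRing R] {a b c : R}

theorem cube_sum_sq_sub_mul_sq_eq_of_add_eq_zero (h : a + b + c = 0) :
    (a ^ 2 + b ^ 2 + c ^ 2) ^ 3 - 54 * (a * b * c) ^ 2 = 2 * ((a - b) * (b - c) * (c - a)) ^ 2 := by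
  obtain rfl : c = -a - b := by linear_combination h
  ring

theorem mul_sq_le_cube_sum_sq_of_add_eq_zero [LinearOrder R] [IsStrictOrderedRing R]
    (h : a + b + c = 0) :
    54 * (a * b * c) ^ 2 ≤ (a ^ 2 + b ^ 2 + c ^ 2) ^ 3 := by
  have := cube_sum_sq_sub_mul_sq_eq_of_add_eq_zero h
  linarith [sq_nonneg ((a - b) * (b - c) * (c - a))]

end

theorem Real.rpow_three_halves_sq {s : ℝ} (hs : 0 ≤ s) : (s ^ ((3 : ℝ) / 2)) ^ 2 = s ^ 3 := by
  rw [← Real.rpow_mul_natCast hs, ← Real.rpow_natCast]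
  norm_num

theorem stmt_13 (a b c : ℝ) (h : a + b + c = 0) :
    36 * (a * b * c) ≤ 2 * Real.sqrt 6 * (a ^ 2 + b ^ 2 + c ^ 2) ^ ((3 : ℝ) / 2) := by
  have hs : 0 ≤ a ^ 2 + b ^ 2 + c ^ 2 := by positivity
  refine le_of_sq_le_sq ?_ (by positivity)
  calc (36 * (a * b * c)) ^ 2 = 24 * (54 * (a * b * c) ^ 2) := by ring
    _ ≤ 24 * (a ^ 2 + b ^ 2 + c ^ 2) ^ 3 := by
      gcongr; exact mul_sq_le_cube_sum_sq_of_add_eq_zero h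
    _ = (2 * Real.sqrt 6 * (a ^ 2 + b ^ 2 + c ^ 2) ^ ((3 : ℝ) / 2)) ^ 2 := by
      rw [mul_pow, Real.rpow_three_halves_sq hs, mul_pow, Real.sq_sqrt (by norm_num)]
      ring
end
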